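/- arXiv:math/0007016 — 2 statements merged into one kernel-verified Lean document; each statement's English description precedes it below -/
import Mathlib

section
/- Let f : ℕ → ℝ⁺. If there exists a constant B such that V_λ(d_f)/E_λ(d_f)² ≤ B for all partitions λ of all n ≥ 2, then there is a constant c with n·Σ_{i=1}^{n−1} f(i)² ≤ c·(n−λ₁)·(Σ_{i=1}^{n−1} f(i))² for every partition λ of n with λ₁ < n. -/
open Finset

/-- A standard Young tableau of shape `μ`: a bijective filling of the cells of `μ`
with the numbers `1, ..., μ.card`, strictly increasing along rows and columns. -/
structure SYT (μ : YoungDiagram) where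
  entry : ℕ → ℕ → ℕ
  row_strict : ∀ ⦃i j1 j2 : ℕ⦄, j1 < j2 → (i, j2) ∈ μ → entry i j1 < entry i j2
  col_strict : ∀ ⦃i1 i2 j : ℕ⦄, i1 < i2 → (i2, j) ∈ μ → entry i1 j < entry i2 j
  zeros : ∀ ⦃i j : ℕ⦄, (i, j) ∉ μ → entry i j = 0
  bijOn : Set.BijOn (fun c : ℕ × ℕ => entry c.1 c.2) (μ.cells : Set (ℕ × ℕ))
    (Set.Icc 1 μ.card)

/-- `T` has a descent at `i` iff the entry `i+1` lies in a strictly lower row than `i`. -/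
def SYT.DescentAt {μ : YoungDiagram} (T : SYT μ) (i : ℕ) : Prop :=
  ∀ c d : ℕ × ℕ, c ∈ μ → d ∈ μ →
    T.entry c.1 c.2 = i → T.entry d.1 d.2 = i + 1 → c.1 < d.1

theorem SYT.entry_le {μ : YoungDiagram} (T : SYT μ) {c : ℕ × ℕ} (hc : c ∈ μ.cells) :
    T.entry c.1 c.2 ≤ μ.card :=
  (T.bijOn.mapsTo (Finset.mem_coe.mpr hc)).2

noncomputable instance SYT.fintype (μ : YoungDiagram) : Fintype (SYT μ) :=
  Fintype.ofInjective
    (fun (T : SYT μ) (c : μ.cells) =>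
      (⟨T.entry c.1.1 c.1.2, Nat.lt_succ_of_le (T.entry_le c.2)⟩ : Fin (μ.card + 1)))
    (fun T S h => by
      have hent : T.entry = S.entry := by
        funext i j
        by_cases hm : (i, j) ∈ μ
        · exact congrArg Fin.val (congrFun h ⟨(i, j), (YoungDiagram.mem_cells _).mpr hm⟩)
        · rw [T.zeros hm, S.zeros hm]
      cases T; cases S; simpa using hent)

open scoped Classical in
/-- The descent function `d_f(T) = Σ_{i ∈ D(T)} f(i)`. -/
noncomputable def SYT.dfun {μ : YoungDiagram} (f : ℕ → ℝ) (T : SYT μ) : ℝ :=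
  ∑ i ∈ (Finset.Icc 1 (μ.card - 1)).filter (fun i => T.DescentAt i), f i

/-- Expectation of `d_f` over uniformly random standard Young tableaux of shape `μ`. -/
noncomputable def SYT.Eexp (μ : YoungDiagram) (f : ℕ → ℝ) : ℝ :=
  (∑ T : SYT μ, T.dfun f) / (Nat.card (SYT μ) : ℝ)

/-- Variance `V(X) = E(X²) − E(X)²` of `d_f` over uniformly random SYT of shape `μ`. -/
noncomputable def SYT.Vvar (μ : YoungDiagram) (f : ℕ → ℝ) : ℝ :=
  (∑ T : SYT μ, (T.dfun f) ^ 2) / (Nat.card (SYT μ) : ℝ) - (SYT.Eexp μ f) ^ 2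

/-!
Only hook shapes are needed. The `n - 1` standard tableaux of shape `(n - 1, 1)` are determined by
the entry of their second row, and the one with `d + 1` there has the single descent `d`. Hence
`d_f` is uniformly distributed on `f 1, …, f (n - 1)`, and the variance bound for this shape reads
`(n - 1) Σ f(i)² ≤ (B + 1) (Σ f(i))²`. Since `n ≤ 2 (n - 1)` and `n - λ₁ ≥ 1`, the constant
`c = 2 (max B 0 + 1)` works for every shape of size `n`.
-/

namespace SYT

variable {μ : YoungDiagram}

theorem ext_entry {T S : SYT μ} (h : T.entry = S.entry) : T = S := by
  cases T; cases S; simpa using h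

theorem entry_mem_Icc (T : SYT μ) {c : ℕ × ℕ} (hc : c ∈ μ) :
    T.entry c.1 c.2 ∈ Icc 1 μ.card :=
  mem_Icc.mpr (T.bijOn.mapsTo (mem_coe.mpr ((YoungDiagram.mem_cells c).mpr hc)))

theorem entry_injOn (T : SYT μ) {c d : ℕ × ℕ} (hc : c ∈ μ) (hd : d ∈ μ)
    (h : T.entry c.1 c.2 = T.entry d.1 d.2) : c = d :=
  T.bijOn.injOn (mem_coe.mpr ((YoungDiagram.mem_cells c).mpr hc))
    (mem_coe.mpr ((YoungDiagram.mem_cells d).mpr hd)) h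

theorem descentAt_iff {T : SYT μ} {i : ℕ} {c d : ℕ × ℕ} (hc : c ∈ μ) (hd : d ∈ μ)
    (hci : T.entry c.1 c.2 = i) (hdi : T.entry d.1 d.2 = i + 1) :
    T.DescentAt i ↔ c.1 < d.1 := by
  refine ⟨fun h => h c d hc hd hci hdi, fun h c' d' hc' hd' hc'i hd'i => ?_⟩
  rw [T.entry_injOn hc' hc (hc'i.trans hci.symm), T.entry_injOn hd' hd (hd'i.trans hdi.symm)]
  exact h

end SYT

/-- The hook shape `(m + 1, 1)`. -/
def hook (m : ℕ) : YoungDiagram where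
  cells := ({0} ×ˢ range (m + 1)) ∪ {(1, 0)}
  isLowerSet := by
    rintro ⟨a, b⟩ ⟨c, d⟩ ⟨hac, hbd⟩ h
    simp only [coe_union, coe_singleton, coe_product, Set.mem_union, Set.mem_prod,
      Set.mem_singleton_iff, mem_coe, mem_range, Prod.mk.injEq] at h ⊢
    simp only at hac hbd
    omega

theorem mem_hook {m i j : ℕ} : (i, j) ∈ hook m ↔ i = 0 ∧ j ≤ m ∨ i = 1 ∧ j = 0 := by
  rw [← YoungDiagram.mem_cells]
  simp [hook]
  omega

theorem card_hook (m : ℕ) : (hook m).card = m + 2 := by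
  change (({0} ×ˢ range (m + 1)) ∪ {(1, 0)} : Finset (ℕ × ℕ)).card = m + 2
  rw [card_union_of_disjoint (by simp)]
  simp

def hookEntry (m d : ℕ) (i j : ℕ) : ℕ :=
  if i = 1 ∧ j = 0 then d + 1
  else if i = 0 ∧ j ≤ m then (if j < d then j + 1 else j + 2) else 0

/-- The tableau of shape `hook m` whose only descent is at `d`. -/
def hookSYT (m d : ℕ) (hd : d ∈ Icc 1 (m + 1)) : SYT (hook m) where
  entry := hookEntry m d
  row_strict := by
    intro i j₁ j₂ hj h₂
    rw [mem_hook] at h₂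
    simp only [hookEntry]
    split_ifs <;> omega
  col_strict := by
    intro i₁ i₂ j hi h₂
    rw [mem_Icc] at hd
    rw [mem_hook] at h₂
    simp only [hookEntry]
    split_ifs <;> omega
  zeros := by
    intro i j h
    rw [mem_hook] at h
    simp only [hookEntry]
    split_ifs <;> omega
  bijOn := by
    rw [mem_Icc] at hd
    rw [card_hook]
    refine ⟨?_, ?_, ?_⟩
    · rintro ⟨i, j⟩ hc
      rw [mem_coe, YoungDiagram.mem_cells, mem_hook] at hc
      simp only [Set.mem_Icc, hookEntry]
      split_ifs <;> omega
    · rintro ⟨i, j⟩ hc ⟨i', j'⟩ hc' he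
      rw [mem_coe, YoungDiagram.mem_cells, mem_hook] at hc hc'
      simp only [hookEntry] at he
      simp only [Prod.mk.injEq]
      split_ifs at he <;> omega
    · rintro v ⟨hv₁, hv₂⟩
      refine ⟨if v = d + 1 then (1, 0) else if v ≤ d then (0, v - 1) else (0, v - 2), ?_, ?_⟩
      · rw [mem_coe, YoungDiagram.mem_cells]
        split_ifs <;> rw [mem_hook] <;> omega
      · simp only [hookEntry]
        split_ifs <;> simp_all <;> omega

@[simp]
theorem hookSYT_entry_one_zero (m d : ℕ) (hd : d ∈ Icc 1 (m + 1)) :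
    (hookSYT m d hd).entry 1 0 = d + 1 := by
  simp [hookSYT, hookEntry]

theorem hookSYT_entry_zero_of_lt {m d : ℕ} (hd : d ∈ Icc 1 (m + 1)) {j : ℕ} (hj : j < d) :
    (hookSYT m d hd).entry 0 j = j + 1 := by
  have := (mem_Icc.mp hd).2
  simp [hookSYT, hookEntry, hj, show j ≤ m by omega]

theorem hookSYT_entry_zero_of_le {m d : ℕ} (hd : d ∈ Icc 1 (m + 1)) {j : ℕ} (hdj : d ≤ j)
    (hj : j ≤ m) : (hookSYT m d hd).entry 0 j = j + 2 := by
  simp [hookSYT, hookEntry, hj, hdj]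

theorem Finset.eq_of_strictMono_of_mapsTo {α : Type*} [LinearOrder α] {s : Finset α} {k : ℕ}
    (hs : s.card = k) {F G : Fin k → α} (hF : StrictMono F) (hG : StrictMono G)
    (hFs : ∀ x, F x ∈ s) (hGs : ∀ x, G x ∈ s) : F = G :=
  (orderEmbOfFin_unique hs hFs hF).trans (orderEmbOfFin_unique hs hGs hG).symm

namespace SYT

variable {m : ℕ} (T : SYT (hook m))

theorem strictMono_hook_entry_zero : StrictMono fun j : Fin (m + 1) => T.entry 0 j :=
  fun _ b hab => T.row_strict hab (mem_hook.mpr (Or.inl ⟨rfl, Nat.lt_succ_iff.mp b.2⟩))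

theorem hook_entry_zero_mem {j : ℕ} (hj : j ≤ m) :
    T.entry 0 j ∈ (Icc 1 (m + 2)).erase (T.entry 1 0) := by
  have hc : (0, j) ∈ hook m := mem_hook.mpr (Or.inl ⟨rfl, hj⟩)
  refine mem_erase.mpr ⟨fun h => ?_, card_hook m ▸ T.entry_mem_Icc hc⟩
  simpa using T.entry_injOn hc (mem_hook.mpr (Or.inr ⟨rfl, rfl⟩)) h

theorem hook_entry_one_zero_mem : T.entry 1 0 ∈ Icc 2 (m + 2) := by
  have h₀₀ := T.entry_mem_Icc (c := (0, 0)) (mem_hook.mpr (Or.inl ⟨rfl, m.zero_le⟩))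
  have h₁₀ := T.entry_mem_Icc (c := (1, 0)) (mem_hook.mpr (Or.inr ⟨rfl, rfl⟩))
  have hlt := T.col_strict (i1 := 0) Nat.zero_lt_one (mem_hook.mpr (Or.inr ⟨rfl, rfl⟩))
  rw [card_hook, mem_Icc] at h₀₀ h₁₀
  dsimp only at h₀₀ h₁₀
  exact mem_Icc.mpr ⟨by omega, h₁₀.2⟩

/-- The first row of a tableau of hook shape increasingly enumerates the numbers not placed in
the second row. -/
theorem eq_of_hook_entry_one_zero_eq {T S : SYT (hook m)} (h : T.entry 1 0 = S.entry 1 0) :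
    T = S := by
  have hs : ((Icc 1 (m + 2)).erase (T.entry 1 0)).card = m + 1 := by
    rw [card_erase_of_mem (Icc_subset_Icc_left one_le_two T.hook_entry_one_zero_mem)]
    simp
  have hrow := Finset.eq_of_strictMono_of_mapsTo hs T.strictMono_hook_entry_zero
    S.strictMono_hook_entry_zero (fun j => T.hook_entry_zero_mem (Nat.lt_succ_iff.mp j.2))
    (fun j => h ▸ S.hook_entry_zero_mem (Nat.lt_succ_iff.mp j.2))
  refine ext_entry (funext fun i => funext fun j => ?_)
  by_cases hc : (i, j) ∈ hook m
  · rcases mem_hook.mp hc with ⟨rfl, hj⟩ | ⟨rfl, rfl⟩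
    · exact congrFun hrow ⟨j, Nat.lt_succ_iff.mpr hj⟩
    · exact h
  · rw [T.zeros hc, S.zeros hc]

end SYT

theorem hookSYT_descentAt_iff {m d : ℕ} (hd : d ∈ Icc 1 (m + 1)) {i : ℕ}
    (hi : i ∈ Icc 1 (m + 1)) : (hookSYT m d hd).DescentAt i ↔ i = d := by
  have := mem_Icc.mp hd
  have := mem_Icc.mp hi
  have hrow : ∀ {j}, j ≤ m → (0, j) ∈ hook m := fun hj => mem_hook.mpr (Or.inl ⟨rfl, hj⟩)
  have hbox : (1, 0) ∈ hook m := mem_hook.mpr (Or.inr ⟨rfl, rfl⟩)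
  rcases lt_trichotomy i d with h | rfl | h
  · rw [SYT.descentAt_iff (hrow (j := i - 1) (by omega)) (hrow (j := i) (by omega))
      ((hookSYT_entry_zero_of_lt hd (by omega)).trans (by omega))
      (hookSYT_entry_zero_of_lt hd h)]
    exact iff_of_false (lt_irrefl 0) h.ne
  · rw [SYT.descentAt_iff (hrow (j := i - 1) (by omega)) hbox
      ((hookSYT_entry_zero_of_lt hd (by omega)).trans (by omega)) (hookSYT_entry_one_zero m i hd)]
    exact iff_of_true Nat.zero_lt_one rfl
  · obtain rfl | h' : i = d + 1 ∨ d + 1 < i := by omega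
    · rw [SYT.descentAt_iff hbox (hrow (j := d) (by omega)) (hookSYT_entry_one_zero m d hd)
        (hookSYT_entry_zero_of_le hd le_rfl (by omega))]
      exact iff_of_false (lt_asymm Nat.zero_lt_one) (by omega)
    · rw [SYT.descentAt_iff (hrow (j := i - 2) (by omega)) (hrow (j := i - 1) (by omega))
        ((hookSYT_entry_zero_of_le hd (by omega) (by omega)).trans (by omega))
        ((hookSYT_entry_zero_of_le hd (by omega) (by omega)).trans (by omega))]
      exact iff_of_false (lt_irrefl 0) h.ne'

theorem hookSYT_dfun {m d : ℕ} (hd : d ∈ Icc 1 (m + 1)) (f : ℕ → ℝ) :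
    (hookSYT m d hd).dfun f = f d := by
  classical
  have hD : (Icc 1 ((hook m).card - 1)).filter (hookSYT m d hd).DescentAt = {d} := by
    ext i
    rw [mem_filter, mem_singleton, card_hook, show m + 2 - 1 = m + 1 from rfl]
    exact ⟨fun h => (hookSYT_descentAt_iff hd h.1).mp h.2,
      fun h => by subst h; exact ⟨hd, (hookSYT_descentAt_iff hd hd).mpr rfl⟩⟩
  rw [SYT.dfun, hD, sum_singleton]

noncomputable def hookEquiv (m : ℕ) : Icc 1 (m + 1) ≃ SYT (hook m) :=
  Equiv.ofBijective (fun d => hookSYT m d d.2)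
    ⟨fun d d' h => Subtype.ext (by simpa using congrArg (fun T : SYT (hook m) => T.entry 1 0) h),
     fun T => by
      have := mem_Icc.mp T.hook_entry_one_zero_mem
      exact ⟨⟨T.entry 1 0 - 1, mem_Icc.mpr (by omega)⟩,
        SYT.eq_of_hook_entry_one_zero_eq (by simp only [hookSYT_entry_one_zero]; omega)⟩⟩

theorem natCard_SYT_hook (m : ℕ) : Nat.card (SYT (hook m)) = m + 1 := by
  rw [← Nat.card_congr (hookEquiv m), Nat.card_eq_fintype_card, Fintype.card_coe, Nat.card_Icc,
    Nat.add_sub_cancel]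

theorem sum_hook_dfun (m : ℕ) (f : ℕ → ℝ) (g : ℝ → ℝ) :
    ∑ T : SYT (hook m), g (T.dfun f) = ∑ i ∈ Icc 1 (m + 1), g (f i) := by
  rw [← (hookEquiv m).sum_comp, ← sum_coe_sort (Icc 1 (m + 1))]
  exact sum_congr rfl fun d _ => congrArg g (hookSYT_dfun d.2 f)

theorem mul_sum_sq_le_of_hook_variance_le {f : ℕ → ℝ} {B : ℝ} (m : ℕ)
    (hS : ∑ i ∈ Icc 1 (m + 1), f i ≠ 0)
    (hB : SYT.Vvar (hook m) f / SYT.Eexp (hook m) f ^ 2 ≤ B) :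
    (m + 1 : ℝ) * ∑ i ∈ Icc 1 (m + 1), f i ^ 2 ≤ (B + 1) * (∑ i ∈ Icc 1 (m + 1), f i) ^ 2 := by
  have hE : SYT.Eexp (hook m) f = (∑ i ∈ Icc 1 (m + 1), f i) / (m + 1) := by
    rw [SYT.Eexp, sum_hook_dfun m f fun x => x, natCard_SYT_hook]
    push_cast
    rfl
  rw [SYT.Vvar, sum_hook_dfun m f fun x => x ^ 2, natCard_SYT_hook, hE,
    div_le_iff₀ (by positivity)] at hB
  push_cast at hB
  field_simp at hB
  linarith

theorem YoungDiagram.rowLen_zero_pos {μ : YoungDiagram} (hμ : 0 < μ.card) : 0 < μ.rowLen 0 := by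
  obtain ⟨⟨i, j⟩, hc⟩ := card_pos.mp hμ
  exact YoungDiagram.mem_iff_lt_rowLen.mp
    (μ.up_left_mem i.zero_le j.zero_le ((YoungDiagram.mem_cells _).mp hc))

/-- If the normalized variance `V_μ(d_f)/E_μ(d_f)²` is bounded by some constant `B`
over all partition shapes `μ` with `|μ| ≥ 2`, then there is a constant `c` with
`n·Σ_{i=1}^{n−1} f(i)² ≤ c·(n−λ₁)·(Σ_{i=1}^{n−1} f(i))²` for every shape `μ` with `λ₁ < n`. -/
theorem ineq_of_normalized_variance_bounded (f : ℕ → ℝ) (hf : ∀ i, 0 < f i)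
    (h : ∃ B : ℝ, ∀ μ : YoungDiagram, 2 ≤ μ.card →
      SYT.Vvar μ f / (SYT.Eexp μ f) ^ 2 ≤ B) :
    ∃ c : ℝ, ∀ μ : YoungDiagram, μ.rowLen 0 < μ.card →
      (μ.card : ℝ) * (∑ i ∈ Finset.Icc 1 (μ.card - 1), (f i) ^ 2) ≤
        c * ((μ.card : ℝ) - (μ.rowLen 0 : ℝ)) *
          (∑ i ∈ Finset.Icc 1 (μ.card - 1), f i) ^ 2 := by
  obtain ⟨B, hB⟩ := h
  refine ⟨2 * (max B 0 + 1), fun μ hμ => ?_⟩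
  have hrow := YoungDiagram.rowLen_zero_pos (hμ.trans_le' (Nat.zero_le _))
  obtain ⟨m, hm⟩ : ∃ m, μ.card = m + 2 := ⟨μ.card - 2, by omega⟩
  rw [hm] at hμ ⊢
  rw [show m + 2 - 1 = m + 1 from rfl]
  have hgap : (1 : ℝ) ≤ (m + 2 : ℕ) - μ.rowLen 0 := by
    rw [le_sub_iff_add_le']
    exact_mod_cast hμ
  have hS : 0 < ∑ i ∈ Icc 1 (m + 1), f i := sum_pos (fun i _ => hf i) ⟨1, by simp⟩
  have hhook := mul_sum_sq_le_of_hook_variance_le m hS.ne'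
    ((hB (hook m) (by rw [card_hook]; omega)).trans (le_max_left B 0))
  calc ((m + 2 : ℕ) : ℝ) * ∑ i ∈ Icc 1 (m + 1), f i ^ 2
      ≤ 2 * ((m + 1) * ∑ i ∈ Icc 1 (m + 1), f i ^ 2) := by
        push_cast
        nlinarith [sum_nonneg fun i (_ : i ∈ Icc 1 (m + 1)) => sq_nonneg (f i)]
    _ ≤ 2 * ((max B 0 + 1) * (∑ i ∈ Icc 1 (m + 1), f i) ^ 2) := by gcongr
    _ = 2 * (max B 0 + 1) * 1 * (∑ i ∈ Icc 1 (m + 1), f i) ^ 2 := by ring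
    _ ≤ 2 * (max B 0 + 1) * ((m + 2 : ℕ) - μ.rowLen 0) * (∑ i ∈ Icc 1 (m + 1), f i) ^ 2 := by
        gcongr
end

section
/- Let λ be a partition of n ≥ 10 with q := λ₁/n > 1/2. Then c_{λ'} − d_λ + e_λ ≤ 20·c_{λ'}², where c_{λ'} = Σ_{i≥j} λ'ᵢ(λ'ⱼ−1)/(n(n−1)), d_λ = Σ_{i≥j≥k, λₖ>2} λᵢ(λⱼ−1)(λₖ−2)/(n(n−1)(n−2)), and e_λ = Σ_{i≥j≥k≥l, λₗ>3} λᵢ(λⱼ−1)(λₖ−2)(λₗ−3)/(n(n−1)(n−2)(n−3)). -/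
open Finset

/-- `c_ν = Σ_{i≥j} ν_i (ν_j − 1) / (n(n−1))`, for the parts function `p` of a partition of `n`. -/
noncomputable def cS (p : ℕ → ℕ) (n : ℕ) : ℝ :=
  ∑ i ∈ Finset.range n, ∑ j ∈ Finset.range (i + 1),
    (p i : ℝ) * ((p j : ℝ) - 1) / (n * ((n : ℝ) - 1))

/-- `d_ν = Σ_{i≥j≥k, ν_k>2} ν_i (ν_j − 1)(ν_k − 2) / (n(n−1)(n−2))`. -/
noncomputable def dS (p : ℕ → ℕ) (n : ℕ) : ℝ :=
  ∑ i ∈ Finset.range n, ∑ j ∈ Finset.range (i + 1),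
    ∑ k ∈ (Finset.range (j + 1)).filter (fun k => 2 < p k),
      (p i : ℝ) * ((p j : ℝ) - 1) * ((p k : ℝ) - 2) / (n * ((n : ℝ) - 1) * ((n : ℝ) - 2))

/-- `e_ν = Σ_{i≥j≥k≥l, ν_k>2, ν_l>3} ν_i (ν_j−1)(ν_k−2)(ν_l−3) / (n(n−1)(n−2)(n−3))`. -/
noncomputable def eS (p : ℕ → ℕ) (n : ℕ) : ℝ :=
  ∑ i ∈ Finset.range n, ∑ j ∈ Finset.range (i + 1),
    ∑ k ∈ (Finset.range (j + 1)).filter (fun k => 2 < p k),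
      ∑ l ∈ (Finset.range (k + 1)).filter (fun l => 3 < p l),
        (p i : ℝ) * ((p j : ℝ) - 1) * ((p k : ℝ) - 2) * ((p l : ℝ) - 3) /
          (n * ((n : ℝ) - 1) * ((n : ℝ) - 2) * ((n : ℝ) - 3))

/-! Write `m = λ₁` and `c = c_{λ'}`. Grouped by `(i, j, k)`, every summand of `d_λ − e_λ` is
nonnegative because `Σ_{l ≤ k} (λ_l − 3)⁺ ≤ n − 3`; keeping only `j = k = 0` gives
`d_λ − e_λ ≥ (n − m)(m − 1)(m − 2) / ((n − 1)(n − 2)(n − 3))`. On the conjugate side the partial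
sums of `λ'_j − 1` never exceed `n − m`, so `c ≤ (n − m)/(n − 1)`, while Chebyshev's sum
inequality for the antitone sequences `λ'_j − 1` and `m − j` (`j < m`) gives
`c ≥ a := (m + 1)(n − m)/(2n(n − 1))`. Since `c − 20c² ≤ c(1 − 20a)`, what remains is a
polynomial inequality in `n` and `m`, valid for `n ≥ 10` and `2m > n`. -/

lemma sum_range_sum_range_succ {R : Type*} [CommRing R] (f : ℕ → R) (m : ℕ) :
    ∑ i ∈ range m, ∑ j ∈ range (i + 1), f j = ∑ j ∈ range m, ((m : R) - j) * f j := by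
  induction m with
  | zero => simp
  | succ m ih =>
    simp only [sum_range_succ _ m, ih, Nat.cast_succ, add_sub_right_comm, add_mul, one_mul,
      sum_add_distrib, sub_self, zero_mul]
    ring

lemma sum_range_cast_sub (m : ℕ) : ∑ j ∈ range m, ((m : ℝ) - j) = m * (m + 1) / 2 := by
  have h := sum_range_sum_range_succ (fun _ => (1 : ℝ)) m
  simp only [sum_const, card_range, nsmul_eq_mul, mul_one] at h
  rw [← h]
  clear h
  induction m with
  | zero => simp
  | succ m ih => rw [sum_range_succ, ih]; push_cast; ring

lemma cast_mul_cast_sub_one_nonneg {p : ℕ → ℕ} (hp : Antitone p) {i j : ℕ} (hji : j ≤ i) :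
    0 ≤ (p i : ℝ) * ((p j : ℝ) - 1) := by
  rcases Nat.eq_zero_or_pos (p j) with hj | hj
  · simp [show p i = 0 by have := hp hji; omega]
  · have : (1 : ℝ) ≤ p j := by exact_mod_cast hj
    exact mul_nonneg (Nat.cast_nonneg _) (by linarith)

namespace YoungDiagram

lemma card_transpose (μ : YoungDiagram) : μ.transpose.card = μ.card := by
  simp [YoungDiagram.card, transpose]

lemma sum_range_rowLen (μ : YoungDiagram) {t : ℕ} (ht : μ.colLen 0 ≤ t) :
    ∑ i ∈ range t, μ.rowLen i = μ.card := by
  have hmaps : (μ.cells : Set (ℕ × ℕ)).MapsTo Prod.fst (range t) := fun c hc => by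
    have := mem_iff_lt_colLen.mp (show (c.1, c.2) ∈ μ from hc)
    exact mem_range.mpr (by have := μ.colLen_anti 0 c.2 (Nat.zero_le _); omega)
  rw [YoungDiagram.card, card_eq_sum_card_fiberwise hmaps]
  exact sum_congr rfl fun i _ => μ.rowLen_eq_card

lemma sum_range_colLen (μ : YoungDiagram) {t : ℕ} (ht : μ.rowLen 0 ≤ t) :
    ∑ j ∈ range t, μ.colLen j = μ.card := by
  simpa [rowLen_transpose, card_transpose] using
    μ.transpose.sum_range_rowLen (by rwa [colLen_transpose])

lemma rowLen_zero_le_card (μ : YoungDiagram) : μ.rowLen 0 ≤ μ.card := by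
  rw [rowLen_eq_card]
  exact card_filter_le _ _

lemma colLen_zero_le_card (μ : YoungDiagram) : μ.colLen 0 ≤ μ.card := by
  rw [colLen_eq_card]
  exact card_filter_le _ _

lemma colLen_eq_zero_of_rowLen_le {μ : YoungDiagram} {j : ℕ} (hj : μ.rowLen 0 ≤ j) :
    μ.colLen j = 0 := by
  by_contra h
  have := mem_iff_lt_rowLen.mp (mem_iff_lt_colLen.mpr (Nat.pos_of_ne_zero h))
  omega

lemma one_le_colLen_of_lt_rowLen {μ : YoungDiagram} {j : ℕ} (hj : j < μ.rowLen 0) :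
    1 ≤ μ.colLen j :=
  mem_iff_lt_colLen.mp (mem_iff_lt_rowLen.mpr hj)

variable (μ : YoungDiagram)

lemma sum_range_colLen_sub_one_le (t : ℕ) :
    ∑ j ∈ range t, ((μ.colLen j : ℝ) - 1) ≤ μ.card - μ.rowLen 0 := by
  have hfull : ∑ j ∈ range (μ.rowLen 0), ((μ.colLen j : ℝ) - 1) = μ.card - μ.rowLen 0 := by
    rw [sum_sub_distrib, ← Nat.cast_sum, μ.sum_range_colLen le_rfl]
    simp
  rw [← hfull, ← sum_filter_add_sum_filter_not (range t) (· < μ.rowLen 0)]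
  have hlt : ∑ j ∈ range t with j < μ.rowLen 0, ((μ.colLen j : ℝ) - 1) ≤
      ∑ j ∈ range (μ.rowLen 0), ((μ.colLen j : ℝ) - 1) := by
    refine sum_le_sum_of_subset_of_nonneg (fun j hj => ?_) fun j hj _ => ?_
    · exact mem_range.mpr (mem_filter.mp hj).2
    · have : (1 : ℝ) ≤ μ.colLen j := by
        exact_mod_cast one_le_colLen_of_lt_rowLen (mem_range.mp hj)
      linarith
  have hge : ∑ j ∈ range t with ¬ j < μ.rowLen 0, ((μ.colLen j : ℝ) - 1) ≤ 0 :=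
    sum_nonpos fun j hj => by
      simp [colLen_eq_zero_of_rowLen_le (not_lt.mp (mem_filter.mp hj).2)]
  linarith

lemma cS_colLen_le (hμ : 0 < μ.card) :
    cS μ.colLen μ.card ≤ ((μ.card : ℝ) - μ.rowLen 0) / ((μ.card : ℝ) - 1) := by
  have hn : (1 : ℝ) ≤ μ.card := by exact_mod_cast hμ
  have hden : (0 : ℝ) ≤ μ.card * ((μ.card : ℝ) - 1) := mul_nonneg (by linarith) (by linarith)
  calc cS μ.colLen μ.card
      = ∑ i ∈ range μ.card, (μ.colLen i : ℝ) * ∑ j ∈ range (i + 1), ((μ.colLen j : ℝ) - 1) /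
          (μ.card * ((μ.card : ℝ) - 1)) := by
        simp only [cS, ← mul_sum, ← sum_div, mul_div_assoc]
    _ ≤ ∑ i ∈ range μ.card, (μ.colLen i : ℝ) * ((μ.card - μ.rowLen 0) /
          (μ.card * ((μ.card : ℝ) - 1))) := by
        gcongr with i
        rw [← sum_div]
        exact div_le_div_of_nonneg_right (μ.sum_range_colLen_sub_one_le _) hden
    _ = ((μ.card : ℝ) - μ.rowLen 0) / ((μ.card : ℝ) - 1) := by
        rw [← sum_mul, ← Nat.cast_sum, μ.sum_range_colLen μ.rowLen_zero_le_card]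
        field_simp

lemma le_cS_colLen (hμ : 0 < μ.card) :
    ((μ.rowLen 0 : ℝ) + 1) * (μ.card - μ.rowLen 0) / (2 * (μ.card * ((μ.card : ℝ) - 1))) ≤
      cS μ.colLen μ.card := by
  set m := μ.rowLen 0
  have hm : 0 < m := by
    by_contra h
    have := μ.sum_range_colLen (t := 0) (by omega)
    simp only [range_zero, sum_empty] at this
    omega
  have hn : (1 : ℝ) ≤ μ.card := by exact_mod_cast hμ
  have hden : (0 : ℝ) ≤ μ.card * ((μ.card : ℝ) - 1) := mul_nonneg (by linarith) (by linarith)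
  have hsum : ∑ j ∈ range m, ((μ.colLen j : ℝ) - 1) = μ.card - m := by
    rw [sum_sub_distrib, ← Nat.cast_sum, μ.sum_range_colLen le_rfl]
    simp
  have hcheb := ((Antitone.monovary (f := fun j : ℕ => (m : ℝ) - j)
    (g := fun j : ℕ => (μ.colLen j : ℝ) - 1) (fun a b h => sub_le_sub_left (Nat.cast_le.mpr h) _)
    fun a b h => by simp [μ.colLen_anti a b h]).monovaryOn (range m)).sum_mul_sum_le_card_mul_sum
  rw [hsum, sum_range_cast_sub, card_range, ← sum_range_sum_range_succ] at hcheb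
  have hm' : (0 : ℝ) < m := by exact_mod_cast hm
  have hlow : ((m : ℝ) + 1) * (μ.card - m) / 2 ≤
      ∑ i ∈ range m, ∑ j ∈ range (i + 1), ((μ.colLen j : ℝ) - 1) := by
    rw [← mul_le_mul_iff_right₀ hm']
    linarith
  have hweight : ∑ i ∈ range m, ∑ j ∈ range (i + 1), ((μ.colLen j : ℝ) - 1) ≤
      ∑ i ∈ range μ.card, ∑ j ∈ range (i + 1), (μ.colLen i : ℝ) * ((μ.colLen j : ℝ) - 1) := by
    calc _ ≤ ∑ i ∈ range m, ∑ j ∈ range (i + 1), (μ.colLen i : ℝ) * ((μ.colLen j : ℝ) - 1) := by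
          refine sum_le_sum fun i hi => sum_le_sum fun j hj => ?_
          have hi' := mem_range.mp hi
          have hj' := mem_range.mp hj
          have hi1 : (1 : ℝ) ≤ μ.colLen i := by exact_mod_cast one_le_colLen_of_lt_rowLen hi'
          have hj1 : (1 : ℝ) ≤ μ.colLen j := by
            exact_mod_cast one_le_colLen_of_lt_rowLen (by omega)
          nlinarith
      _ ≤ _ := sum_le_sum_of_subset_of_nonneg (range_subset_range.mpr μ.rowLen_zero_le_card)
          fun i _ _ => sum_nonneg fun j hj =>
            cast_mul_cast_sub_one_nonneg μ.colLen_anti (Nat.lt_succ_iff.mp (mem_range.mp hj))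
  rw [cS, ← div_div]
  simp only [← sum_div]
  exact div_le_div_of_nonneg_right (hlow.trans hweight) hden

end YoungDiagram

section AntitoneParts

variable {p : ℕ → ℕ} {n : ℕ}

lemma sum_filter_cast_sub_three_le (hsum : ∑ i ∈ range n, p i = n) (hn : 3 ≤ n) {k : ℕ}
    (hk : k < n) : ∑ l ∈ (range (k + 1)).filter (fun l => 3 < p l), ((p l : ℝ) - 3) ≤ n - 3 := by
  have hn' : (3 : ℝ) ≤ n := by exact_mod_cast hn
  set F := (range (k + 1)).filter (fun l => 3 < p l)
  rcases F.eq_empty_or_nonempty with hF | hF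
  · simpa [hF] using hn'
  have hpF : ∑ l ∈ F, (p l : ℝ) ≤ n := by
    have hsub : F ⊆ range n := fun l hl => mem_range.mpr <| by
      have := mem_range.mp (mem_filter.mp hl).1
      omega
    exact_mod_cast hsum ▸ sum_le_sum_of_subset hsub
  have hcard : (1 : ℝ) ≤ #F := by exact_mod_cast hF.card_pos
  rw [sum_sub_distrib, sum_const, nsmul_eq_mul]
  linarith

lemma dS_term_sub_eS_terms_nonneg (hp : Antitone p) (hsum : ∑ i ∈ range n, p i = n) (hn : 4 ≤ n)
    {i j k : ℕ} (hji : j ≤ i) (hk : k < n) (hpk : 2 < p k) :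
    0 ≤ (p i : ℝ) * ((p j : ℝ) - 1) * ((p k : ℝ) - 2) / (n * ((n : ℝ) - 1) * ((n : ℝ) - 2)) -
      ∑ l ∈ (range (k + 1)).filter (fun l => 3 < p l),
        (p i : ℝ) * ((p j : ℝ) - 1) * ((p k : ℝ) - 2) * ((p l : ℝ) - 3) /
          (n * ((n : ℝ) - 1) * ((n : ℝ) - 2) * ((n : ℝ) - 3)) := by
  have hn' : (4 : ℝ) ≤ n := by exact_mod_cast hn
  have hpk' : (2 : ℝ) < p k := by exact_mod_cast hpk
  have hT : 0 ≤ (p i : ℝ) * ((p j : ℝ) - 1) * ((p k : ℝ) - 2) :=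
    mul_nonneg (cast_mul_cast_sub_one_nonneg hp hji) (by linarith)
  rw [← sum_div, ← mul_sum, sub_nonneg]
  calc _ ≤ (p i : ℝ) * ((p j : ℝ) - 1) * ((p k : ℝ) - 2) * (n - 3) /
        (n * ((n : ℝ) - 1) * ((n : ℝ) - 2) * ((n : ℝ) - 3)) := by
        gcongr
        · exact mul_nonneg (mul_nonneg (mul_nonneg (by linarith) (by linarith)) (by linarith))
            (by linarith)
        · exact sum_filter_cast_sub_three_le hsum (by omega) hk
    _ = _ := by
        have : (n : ℝ) - 3 ≠ 0 := by linarith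
        field_simp

lemma le_sum_dS_term_sub_eS_terms (hp : Antitone p) (hsum : ∑ i ∈ range n, p i = n)
    (hn : 4 ≤ n) (hp0 : 3 < p 0) {i j : ℕ} (hji : j ≤ i) (hi : i < n) :
    (p i : ℝ) * ((p j : ℝ) - 1) * ((p 0 : ℝ) - 2) * (n - p 0) /
        (n * ((n : ℝ) - 1) * ((n : ℝ) - 2) * ((n : ℝ) - 3)) ≤
      ∑ k ∈ (range (j + 1)).filter (fun k => 2 < p k),
        ((p i : ℝ) * ((p j : ℝ) - 1) * ((p k : ℝ) - 2) / (n * ((n : ℝ) - 1) * ((n : ℝ) - 2)) -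
          ∑ l ∈ (range (k + 1)).filter (fun l => 3 < p l),
            (p i : ℝ) * ((p j : ℝ) - 1) * ((p k : ℝ) - 2) * ((p l : ℝ) - 3) /
              (n * ((n : ℝ) - 1) * ((n : ℝ) - 2) * ((n : ℝ) - 3))) := by
  have hn' : (4 : ℝ) ≤ n := by exact_mod_cast hn
  have h0 : 0 ∈ (range (j + 1)).filter (fun k => 2 < p k) := by
    simp only [mem_filter, mem_range]
    omega
  refine le_trans (le_of_eq ?_) (single_le_sum (fun k hk => ?_) h0)
  · have : (range (0 + 1)).filter (fun l => 3 < p l) = {0} := by simp [filter_singleton, hp0]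
    rw [this, sum_singleton]
    have : (n : ℝ) - 3 ≠ 0 := by linarith
    field_simp
    ring
  · rw [mem_filter, mem_range] at hk
    exact dS_term_sub_eS_terms_nonneg hp hsum hn hji (by omega) hk.2

lemma le_dS_sub_eS (hp : Antitone p) (hsum : ∑ i ∈ range n, p i = n) (hn : 4 ≤ n)
    (hp0 : 3 < p 0) :
    ((n : ℝ) - p 0) * ((p 0 : ℝ) - 1) * ((p 0 : ℝ) - 2) /
        (((n : ℝ) - 1) * ((n : ℝ) - 2) * ((n : ℝ) - 3)) ≤ dS p n - eS p n := by
  have hn' : (4 : ℝ) ≤ n := by exact_mod_cast hn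
  have hp0' : (3 : ℝ) < p 0 := by exact_mod_cast hp0
  have hpn : (p 0 : ℝ) ≤ n := by
    exact_mod_cast hsum ▸ single_le_sum (fun i _ => Nat.zero_le (p i)) (mem_range.mpr (by omega))
  have hc : 0 ≤ ((p 0 : ℝ) - 2) * (n - p 0) / (n * ((n : ℝ) - 1) * ((n : ℝ) - 2) * ((n : ℝ) - 3)) :=
    div_nonneg (mul_nonneg (by linarith) (by linarith))
      (mul_nonneg (mul_nonneg (mul_nonneg (by linarith) (by linarith)) (by linarith)) (by linarith))
  have hsplit : dS p n - eS p n = ∑ i ∈ range n, ∑ j ∈ range (i + 1),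
      ∑ k ∈ (range (j + 1)).filter (fun k => 2 < p k),
        ((p i : ℝ) * ((p j : ℝ) - 1) * ((p k : ℝ) - 2) / (n * ((n : ℝ) - 1) * ((n : ℝ) - 2)) -
          ∑ l ∈ (range (k + 1)).filter (fun l => 3 < p l),
            (p i : ℝ) * ((p j : ℝ) - 1) * ((p k : ℝ) - 2) * ((p l : ℝ) - 3) /
              (n * ((n : ℝ) - 1) * ((n : ℝ) - 2) * ((n : ℝ) - 3))) := by
    simp only [dS, eS, ← sum_sub_distrib]
  rw [hsplit]
  calc _ = ∑ i ∈ range n, (p i : ℝ) * ((p 0 : ℝ) - 1) *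
        (((p 0 : ℝ) - 2) * (n - p 0) / (n * ((n : ℝ) - 1) * ((n : ℝ) - 2) * ((n : ℝ) - 3))) := by
        rw [← sum_mul, ← sum_mul, ← Nat.cast_sum, hsum]
        have : (n : ℝ) ≠ 0 := by linarith
        field_simp
    _ ≤ ∑ i ∈ range n, ∑ j ∈ range (i + 1), (p i : ℝ) * ((p j : ℝ) - 1) *
        (((p 0 : ℝ) - 2) * (n - p 0) / (n * ((n : ℝ) - 1) * ((n : ℝ) - 2) * ((n : ℝ) - 3))) :=
        sum_le_sum fun i _ => single_le_sum (f := fun j => (p i : ℝ) * ((p j : ℝ) - 1) * _)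
          (fun j hj => mul_nonneg (cast_mul_cast_sub_one_nonneg hp
            (Nat.lt_succ_iff.mp (mem_range.mp hj))) hc) (mem_range.mpr i.succ_pos)
    _ ≤ _ := sum_le_sum fun i hi => sum_le_sum fun j hj => by
        rw [← mul_div_assoc, ← mul_assoc]
        exact le_sum_dS_term_sub_eS_terms hp hsum hn hp0 (Nat.lt_succ_iff.mp (mem_range.mp hj))
          (mem_range.mp hi)

end AntitoneParts

lemma sub_mul_sq_le_of_bounds {K a b c D : ℝ} (hK : 0 ≤ K) (ha : 0 ≤ a) (hac : a ≤ c)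
    (hcb : c ≤ b) (hD : 0 ≤ D) (hbD : b * (1 - K * a) ≤ D) : c - K * c ^ 2 ≤ D := by
  have hc : c - K * c ^ 2 ≤ c * (1 - K * a) := by
    nlinarith [mul_le_mul_of_nonneg_left hac (mul_nonneg hK (ha.trans hac))]
  rcases le_total 0 (1 - K * a) with h | h
  · nlinarith [mul_le_mul_of_nonneg_right hcb h]
  · nlinarith [mul_nonpos_of_nonneg_of_nonpos (ha.trans hac) h]

lemma sub_div_mul_one_sub_le {n m : ℝ} (h10 : 10 ≤ n) (hm : n + 1 ≤ 2 * m) (hmn : m ≤ n) :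
    (n - m) / (n - 1) * (1 - 20 * ((m + 1) * (n - m) / (2 * (n * (n - 1))))) ≤
      (n - m) * (m - 1) * (m - 2) / ((n - 1) * (n - 2) * (n - 3)) := by
  -- concave quadratic in `r = n − m`, positive at `r = 0` and at `r = (n − 1)/2`
  have hpoly : n * (n - 1) * (n - 2) * (n - 3) - 10 * (m + 1) * (n - m) * (n - 2) * (n - 3) ≤
      (m - 1) * (m - 2) * n * (n - 1) := by
    obtain ⟨r, rfl⟩ : ∃ r, m = n - r := ⟨n - m, by ring⟩
    have hA : 0 ≤ 10 * (n - 2) * (n - 3) - n * (n - 1) := by nlinarith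
    have hr : 0 ≤ r := by linarith
    nlinarith [mul_nonneg hA (mul_nonneg hr (by linarith : 0 ≤ n - 1 - 2 * r)),
      mul_nonneg hr (by nlinarith : (0 : ℝ) ≤ 8 * n ^ 2 - 45 * n + 57),
      mul_nonneg (mul_nonneg hr (by linarith : (0 : ℝ) ≤ n - 10)) (by nlinarith : (0 : ℝ) ≤ n * n),
      mul_nonneg (mul_nonneg hr (by linarith : (0 : ℝ) ≤ n - 2)) (by linarith : (0 : ℝ) ≤ n - 3)]
  have h1 : n - 1 ≠ 0 := by linarith
  have hn : n ≠ 0 := by linarith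
  rw [show (n - m) / (n - 1) * (1 - 20 * ((m + 1) * (n - m) / (2 * (n * (n - 1))))) =
      (n - m) * (n * (n - 1) - 10 * (m + 1) * (n - m)) / ((n - 1) * (n * (n - 1))) by
    field_simp; ring]
  rw [div_le_div_iff₀ (mul_pos (by linarith) (mul_pos (by linarith) (by linarith)))
    (mul_pos (mul_pos (by linarith) (by linarith)) (by linarith))]
  nlinarith [mul_le_mul_of_nonneg_left hpoly (mul_nonneg (by linarith : 0 ≤ n - m)
    (by linarith : 0 ≤ n - 1))]

/-- For a partition `λ` of `n ≥ 10` with `q = λ₁/n > 1/2`: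
`c_{λ'} − d_λ + e_λ ≤ 20·c_{λ'}²`. -/
theorem c_sub_d_add_e_bound (μ : YoungDiagram) (n : ℕ) (hn : μ.card = n) (h10 : 10 ≤ n)
    (q : ℝ) (hq : q = (μ.rowLen 0 : ℝ) / n) (hq2 : 1 / 2 < q) :
    cS μ.colLen n - dS μ.rowLen n + eS μ.rowLen n ≤ 20 * (cS μ.colLen n) ^ 2 := by
  subst hn hq
  have h10' : (10 : ℝ) ≤ μ.card := by exact_mod_cast h10
  have hlt : μ.card < 2 * μ.rowLen 0 := by
    rw [lt_div_iff₀ (by linarith)] at hq2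
    exact_mod_cast (by linarith : (μ.card : ℝ) < 2 * μ.rowLen 0)
  have hm : (μ.card : ℝ) + 1 ≤ 2 * μ.rowLen 0 := by exact_mod_cast hlt
  have hmn : (μ.rowLen 0 : ℝ) ≤ μ.card := by exact_mod_cast μ.rowLen_zero_le_card
  have hde := le_dS_sub_eS μ.rowLen_anti (μ.sum_range_rowLen μ.colLen_zero_le_card) (by omega)
    (by exact_mod_cast (by linarith : (3 : ℝ) < μ.rowLen 0))
  have hD : 0 ≤ ((μ.card : ℝ) - μ.rowLen 0) * ((μ.rowLen 0 : ℝ) - 1) * ((μ.rowLen 0 : ℝ) - 2) /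
      (((μ.card : ℝ) - 1) * ((μ.card : ℝ) - 2) * ((μ.card : ℝ) - 3)) :=
    div_nonneg (mul_nonneg (mul_nonneg (by linarith) (by linarith)) (by linarith))
      (mul_nonneg (mul_nonneg (by linarith) (by linarith)) (by linarith))
  have ha : 0 ≤ ((μ.rowLen 0 : ℝ) + 1) * (μ.card - μ.rowLen 0) /
      (2 * (μ.card * ((μ.card : ℝ) - 1))) :=
    div_nonneg (mul_nonneg (by positivity) (by linarith))
      (mul_nonneg zero_le_two (mul_nonneg (by linarith) (by linarith)))
  have hpos : 0 < μ.card := by omega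
  have := sub_mul_sq_le_of_bounds (by norm_num) ha (μ.le_cS_colLen hpos) (μ.cS_colLen_le hpos)
    (hD.trans hde) ((sub_div_mul_one_sub_le h10' hm hmn).trans hde)
  linarith
end
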